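/- arXiv:2412.17116 — 7 statements merged into one kernel-verified Lean document; each statement's English description precedes it below -/
import Mathlib

section
/- The topological closure of V equals V̄, i.e., cl(V) = V̄. In particular, every point (v̄, z̄) ∈ V̄ is the limit as ε → 0+ of points (v_ε, z̄) ∈ V obtained by setting (v_ε)_i = v̄_i + ε for every index i such that v̄_i = b_j and z̄_{ij} = 1 for some j, and (v_ε)_i = v̄_i otherwise. -/
/-!
Coordinatewise, `(v, z) ∈ V̄` says `z_{ij} = 0 ∧ v_i ≤ b_j` or `z_{ij} = 1 ∧ b_j ≤ v_i`; this is a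
closed condition satisfied on `V`. A point of `V̄` misses `V` exactly at the entries with
`v_i = b_j` and `z_{ij} = 1`. Raising such a `v_i` by `ε > 0` repairs these entries, and since the
breakpoints are distinct, `v_i` then lies on no breakpoint with `z_{ij} = 0`, so for `ε` smaller
than the gap to the breakpoints above `v_i` no other entry changes.
-/

open Filter Topology Set Function

section

variable {ι κ : Type*} (b : κ → ℝ)

def thresholdSet : Set ((ι → ℝ) × (ι → κ → ℝ)) :=
  {vz | ∀ i j, vz.2 i j = if b j < vz.1 i then 1 else 0}

def relaxedThresholdSet : Set ((ι → ℝ) × (ι → κ → ℝ)) :=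
  {vz | (∀ i j, vz.2 i j = 0 ∨ vz.2 i j = 1) ∧
    ∀ i j, 0 ≤ (vz.1 i - b j) * vz.2 i j ∧ (vz.1 i - b j) * (1 - vz.2 i j) ≤ 0}

theorem relaxed_step_iff {x c t : ℝ} :
    ((t = 0 ∨ t = 1) ∧ 0 ≤ (x - c) * t ∧ (x - c) * (1 - t) ≤ 0) ↔
      (t = 0 ∧ x ≤ c) ∨ (t = 1 ∧ c ≤ x) := by
  constructor
  · rintro ⟨rfl | rfl, h₁, h₂⟩
    · exact .inl ⟨rfl, by linarith⟩
    · exact .inr ⟨rfl, by linarith⟩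
  · rintro (⟨rfl, h⟩ | ⟨rfl, h⟩)
    · exact ⟨.inl rfl, by simp, by linarith⟩
    · exact ⟨.inr rfl, by linarith, by simp⟩

variable {b}

theorem mem_relaxedThresholdSet_iff {vz : (ι → ℝ) × (ι → κ → ℝ)} :
    vz ∈ relaxedThresholdSet b ↔
      ∀ i j, (vz.2 i j = 0 ∧ vz.1 i ≤ b j) ∨ (vz.2 i j = 1 ∧ b j ≤ vz.1 i) := by
  simp only [relaxedThresholdSet, mem_ofPred_eq, ← relaxed_step_iff, ← forall_and]

variable (b)

theorem isClosed_relaxedThresholdSet : IsClosed (relaxedThresholdSet (ι := ι) b) := by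
  simp only [relaxedThresholdSet, ofPred_and, ofPred_forall, ofPred_or]
  refine .inter (isClosed_iInter fun i => isClosed_iInter fun j => .union ?_ ?_)
    (isClosed_iInter fun i => isClosed_iInter fun j => .inter ?_ ?_) <;>
  first
  | exact isClosed_eq (by fun_prop) (by fun_prop)
  | exact isClosed_le (by fun_prop) (by fun_prop)

theorem thresholdSet_subset_relaxedThresholdSet :
    thresholdSet (ι := ι) b ⊆ relaxedThresholdSet b := by
  intro vz h
  refine mem_relaxedThresholdSet_iff.2 fun i j => ?_
  rw [h i j]
  split_ifs with hlt
  · exact .inr ⟨rfl, hlt.le⟩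
  · exact .inl ⟨rfl, not_lt.1 hlt⟩

theorem closure_thresholdSet_subset :
    closure (thresholdSet (ι := ι) b) ⊆ relaxedThresholdSet b :=
  closure_minimal (thresholdSet_subset_relaxedThresholdSet b) (isClosed_relaxedThresholdSet b)

def IsBreakpointShift (v : ι → ℝ) (z : ι → κ → ℝ) (vε : ℝ → ι → ℝ) : Prop :=
  ∀ ε i, ((∃ j, v i = b j ∧ z i j = 1) → vε ε i = v i + ε) ∧
    ((∀ j, ¬(v i = b j ∧ z i j = 1)) → vε ε i = v i)

theorem exists_isBreakpointShift (v : ι → ℝ) (z : ι → κ → ℝ) :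
    ∃ vε, IsBreakpointShift b v z vε := by
  classical
  refine ⟨fun ε i => if ∃ j, v i = b j ∧ z i j = 1 then v i + ε else v i, fun ε i => ?_⟩
  exact ⟨fun h => if_pos h, fun h => if_neg (not_exists.2 h)⟩

variable {b}

theorem tendsto_breakpointShift {v : ι → ℝ} {z : ι → κ → ℝ} {vε : ℝ → ι → ℝ}
    (hvε : IsBreakpointShift b v z vε) : Tendsto vε (𝓝[>] 0) (𝓝 v) := by
  refine tendsto_pi_nhds.2 fun i => ?_
  by_cases hi : ∃ j, v i = b j ∧ z i j = 1
  · have hadd : Tendsto (fun ε => v i + ε) (𝓝[>] 0) (𝓝 (v i)) := by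
      simpa using tendsto_nhdsWithin_of_tendsto_nhds ((continuous_const_add (v i)).tendsto 0)
    exact hadd.congr fun ε => ((hvε ε i).1 hi).symm
  · exact tendsto_const_nhds.congr fun ε => ((hvε ε i).2 (not_exists.1 hi)).symm

theorem eventually_eq_ite_lt_add {x : ℝ} {t : κ → ℝ}
    (ht : ∀ j, (t j = 0 ∧ x ≤ b j) ∨ (t j = 1 ∧ b j ≤ x)) (hb : Injective b)
    (hx : ∃ j, x = b j ∧ t j = 1) (j : κ) :
    ∀ᶠ ε in 𝓝[>] 0, t j = if b j < x + ε then 1 else 0 := by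
  rcases ht j with ⟨h0, hle⟩ | ⟨h1, hge⟩
  · rcases hle.lt_or_eq with hlt | heq
    · filter_upwards [nhdsWithin_le_nhds (eventually_lt_nhds (sub_pos.2 hlt))] with ε hε
      rw [h0, if_neg (by linarith)]
    · -- `x` already lies on a breakpoint carrying `t = 1`, and breakpoints are distinct.
      obtain ⟨j₀, hj₀, ht₀⟩ := hx
      obtain rfl : j = j₀ := hb (heq.symm.trans hj₀)
      exact absurd (h0.symm.trans ht₀) zero_ne_one
  · filter_upwards [self_mem_nhdsWithin] with ε (hε : 0 < ε)
    rw [h1, if_pos (by linarith)]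

theorem eq_ite_lt {x : ℝ} {t : κ → ℝ}
    (ht : ∀ j, (t j = 0 ∧ x ≤ b j) ∨ (t j = 1 ∧ b j ≤ x))
    (hx : ∀ j, ¬(x = b j ∧ t j = 1)) (j : κ) :
    t j = if b j < x then 1 else 0 := by
  rcases ht j with ⟨h0, hle⟩ | ⟨h1, hge⟩
  · rw [h0, if_neg hle.not_gt]
  · rw [h1, if_pos (hge.lt_of_ne fun h => hx j ⟨h.symm, h1⟩)]

theorem eventually_mem_thresholdSet [Finite ι] [Finite κ] (hb : Injective b)
    {v : ι → ℝ} {z : ι → κ → ℝ} (hvz : (v, z) ∈ relaxedThresholdSet b) {vε : ℝ → ι → ℝ}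
    (hvε : IsBreakpointShift b v z vε) : ∀ᶠ ε in 𝓝[>] 0, (vε ε, z) ∈ thresholdSet b := by
  have ht := mem_relaxedThresholdSet_iff.1 hvz
  refine eventually_all.2 fun i => eventually_all.2 fun j => ?_
  by_cases hi : ∃ j, v i = b j ∧ z i j = 1
  · filter_upwards [eventually_eq_ite_lt_add (ht i) hb hi j] with ε hε
    show z i j = if b j < vε ε i then 1 else 0
    rwa [(hvε ε i).1 hi]
  · filter_upwards with ε
    show z i j = if b j < vε ε i then 1 else 0
    rw [(hvε ε i).2 (not_exists.1 hi)]
    exact eq_ite_lt (ht i) (not_exists.1 hi) j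

theorem relaxedThresholdSet_subset_closure [Finite ι] [Finite κ] (hb : Injective b) :
    relaxedThresholdSet b ⊆ closure (thresholdSet (ι := ι) b) := by
  rintro ⟨v, z⟩ hvz
  obtain ⟨vε, hvε⟩ := exists_isBreakpointShift b v z
  exact mem_closure_of_tendsto ((tendsto_breakpointShift hvε).prodMk_nhds tendsto_const_nhds)
    (eventually_mem_thresholdSet hb hvz hvε)

end

theorem stmt2_general (m ℓ : ℕ)
    (b : Fin ℓ → ℝ) (hb : StrictMono b) :
    closure {vz : (Fin m → ℝ) × (Fin m → Fin ℓ → ℝ) |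
        ∀ i j, vz.2 i j = if b j < vz.1 i then 1 else 0} =
      {vz : (Fin m → ℝ) × (Fin m → Fin ℓ → ℝ) |
        (∀ i j, vz.2 i j = 0 ∨ vz.2 i j = 1) ∧
        ∀ i j, 0 ≤ (vz.1 i - b j) * vz.2 i j ∧ (vz.1 i - b j) * (1 - vz.2 i j) ≤ 0} ∧
    ∀ vz : (Fin m → ℝ) × (Fin m → Fin ℓ → ℝ),
      vz ∈ {vz : (Fin m → ℝ) × (Fin m → Fin ℓ → ℝ) |
          (∀ i j, vz.2 i j = 0 ∨ vz.2 i j = 1) ∧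
          ∀ i j, 0 ≤ (vz.1 i - b j) * vz.2 i j ∧ (vz.1 i - b j) * (1 - vz.2 i j) ≤ 0} →
      ∀ vε : ℝ → Fin m → ℝ,
        (∀ ε i, ((∃ j, vz.1 i = b j ∧ vz.2 i j = 1) → vε ε i = vz.1 i + ε) ∧
                ((∀ j, ¬(vz.1 i = b j ∧ vz.2 i j = 1)) → vε ε i = vz.1 i)) →
        (∃ ε₀ > (0 : ℝ), ∀ ε : ℝ, 0 < ε → ε < ε₀ →
          (vε ε, vz.2) ∈ {vz' : (Fin m → ℝ) × (Fin m → Fin ℓ → ℝ) |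
            ∀ i j, vz'.2 i j = if b j < vz'.1 i then 1 else 0}) ∧
        Filter.Tendsto (fun ε : ℝ => ((vε ε, vz.2) : (Fin m → ℝ) × (Fin m → Fin ℓ → ℝ)))
          (nhdsWithin 0 (Set.Ioi 0)) (nhds vz) := by
  refine ⟨(closure_thresholdSet_subset b).antisymm
    (relaxedThresholdSet_subset_closure hb.injective), ?_⟩
  rintro ⟨v, z⟩ hvz vε hvε
  obtain ⟨ε₀, hε₀, hsub⟩ := mem_nhdsGT_iff_exists_Ioo_subset.1
    (eventually_mem_thresholdSet hb.injective hvz hvε)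
  exact ⟨⟨ε₀, hε₀, fun ε h₀ h₁ => hsub ⟨h₀, h₁⟩⟩,
    (tendsto_breakpointShift hvε).prodMk_nhds tendsto_const_nhds⟩

/-- `cl(V) = V̄`.  In particular every `(v̄, z̄) ∈ V̄` is the limit as `ε → 0⁺` of points
`(v_ε, z̄) ∈ V`, where `(v_ε)ᵢ = v̄ᵢ + ε` for every `i` such that `v̄ᵢ = bⱼ` and `z̄_{ij} = 1`
for some `j`, and `(v_ε)ᵢ = v̄ᵢ` otherwise. -/
theorem stmt2 (m ℓ : ℕ) (hm : 1 ≤ m) (hℓ : 1 ≤ ℓ)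
    (b : Fin ℓ → ℝ) (hb : StrictMono b) :
    closure {vz : (Fin m → ℝ) × (Fin m → Fin ℓ → ℝ) |
        ∀ i j, vz.2 i j = if b j < vz.1 i then 1 else 0} =
      {vz : (Fin m → ℝ) × (Fin m → Fin ℓ → ℝ) |
        (∀ i j, vz.2 i j = 0 ∨ vz.2 i j = 1) ∧
        ∀ i j, 0 ≤ (vz.1 i - b j) * vz.2 i j ∧ (vz.1 i - b j) * (1 - vz.2 i j) ≤ 0} ∧
    ∀ vz : (Fin m → ℝ) × (Fin m → Fin ℓ → ℝ),
      vz ∈ {vz : (Fin m → ℝ) × (Fin m → Fin ℓ → ℝ) |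
          (∀ i j, vz.2 i j = 0 ∨ vz.2 i j = 1) ∧
          ∀ i j, 0 ≤ (vz.1 i - b j) * vz.2 i j ∧ (vz.1 i - b j) * (1 - vz.2 i j) ≤ 0} →
      ∀ vε : ℝ → Fin m → ℝ,
        (∀ ε i, ((∃ j, vz.1 i = b j ∧ vz.2 i j = 1) → vε ε i = vz.1 i + ε) ∧
                ((∀ j, ¬(vz.1 i = b j ∧ vz.2 i j = 1)) → vε ε i = vz.1 i)) →
        (∃ ε₀ > (0 : ℝ), ∀ ε : ℝ, 0 < ε → ε < ε₀ →
          (vε ε, vz.2) ∈ {vz' : (Fin m → ℝ) × (Fin m → Fin ℓ → ℝ) |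
            ∀ i j, vz'.2 i j = if b j < vz'.1 i then 1 else 0}) ∧
        Filter.Tendsto (fun ε : ℝ => ((vε ε, vz.2) : (Fin m → ℝ) × (Fin m → Fin ℓ → ℝ)))
          (nhdsWithin 0 (Set.Ioi 0)) (nhds vz) :=
  stmt2_general m ℓ b hb
end

section
/- For every v ∈ ℝ, the point (v, 0) (with all binary coordinates equal to zero) belongs to the closed convex hull of Ū. Specifically, if v ≤ b_1 then (v, 0) ∈ Ū, and otherwise (v, 0) = lim_{λ→0+} (1−λ)(b_1, 0) + λ(b_ℓ + (v − b_1)/λ, 1), where both (b_1, 0) ∈ Ū and (b_ℓ + (v − b_1)/λ, 1) ∈ Ū for all λ ∈ (0,1). -/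
/-! The point `(v, 0)` with `v > b₁` is not in `Ū`, but it is the limit of convex combinations
of `(b₁, 0) ∈ Ū` and `(b_ℓ + (v - b₁)/λ, 𝟙) ∈ Ū` with weight `λ → 0⁺` on the second point:
the vanishing weight kills the binary part while the blown-up continuous part keeps contributing
exactly `v - b₁`. -/

/-- The single-row set `Ū = {(v, z) ∈ ℝ × {0,1}^ℓ :
(v − bⱼ) zⱼ ≥ 0, (v − bⱼ)(1 − zⱼ) ≤ 0 ∀ j}`. -/
def Ubar (ℓ : ℕ) (b : Fin ℓ → ℝ) : Set (ℝ × (Fin ℓ → ℝ)) :=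
  {uz | (∀ j, uz.2 j = 0 ∨ uz.2 j = 1) ∧
    ∀ j, 0 ≤ (uz.1 - b j) * uz.2 j ∧ (uz.1 - b j) * (1 - uz.2 j) ≤ 0}

section Ubar

variable {ℓ : ℕ} {b : Fin ℓ → ℝ} {u : ℝ}

theorem mk_zero_mem_Ubar (hu : ∀ j, u ≤ b j) : (u, (0 : Fin ℓ → ℝ)) ∈ Ubar ℓ b :=
  ⟨fun _ => Or.inl rfl, fun j => ⟨by simp, by simpa using hu j⟩⟩

theorem mk_one_mem_Ubar (hu : ∀ j, b j ≤ u) : (u, fun _ : Fin ℓ => (1 : ℝ)) ∈ Ubar ℓ b :=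
  ⟨fun _ => Or.inr rfl, fun j => ⟨by simpa using hu j, by simp⟩⟩

end Ubar

open Topology in
theorem tendsto_sub_smul_add_smul_add_inv_smul {E : Type*} [AddCommGroup E] [Module ℝ E]
    [TopologicalSpace E] [ContinuousAdd E] [ContinuousSMul ℝ E] (p q w : E) :
    Filter.Tendsto (fun t : ℝ => (1 - t) • p + t • (q + t⁻¹ • w))
      (𝓝[≠] 0) (𝓝 (p + w)) := by
  have hcont : Continuous fun t : ℝ => (1 - t) • p + t • q + w := by fun_prop
  refine ((hcont.tendsto' 0 (p + w) (by simp)).mono_left nhdsWithin_le_nhds).congr' ?_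
  filter_upwards [self_mem_nhdsWithin] with t ht
  rw [smul_add, smul_inv_smul₀ ht, add_assoc]

/-- For every `v ∈ ℝ`, the point `(v, 0)` belongs to `cl conv(Ū)`.  Specifically, if
`v ≤ b₁` then `(v, 0) ∈ Ū`; otherwise `(v, 0) = lim_{λ→0⁺} (1−λ)(b₁, 0) +
λ(b_ℓ + (v − b₁)/λ, 𝟙)`, where `(b₁, 0) ∈ Ū` and `(b_ℓ + (v − b₁)/λ, 𝟙) ∈ Ū`
for all `λ ∈ (0,1)`. -/
theorem stmt3 (ℓ : ℕ) (hℓ : 1 ≤ ℓ) (b : Fin ℓ → ℝ) (hb : StrictMono b) (v : ℝ) :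
    (v, (0 : Fin ℓ → ℝ)) ∈ closure (convexHull ℝ (Ubar ℓ b)) ∧
    (v ≤ b ⟨0, hℓ⟩ → (v, (0 : Fin ℓ → ℝ)) ∈ Ubar ℓ b) ∧
    (b ⟨0, hℓ⟩ < v →
      Filter.Tendsto (fun lam : ℝ =>
          (1 - lam) • ((b ⟨0, hℓ⟩, (0 : Fin ℓ → ℝ)) : ℝ × (Fin ℓ → ℝ)) +
            lam • ((b ⟨ℓ - 1, Nat.sub_lt hℓ Nat.one_pos⟩ + (v - b ⟨0, hℓ⟩) / lam,
              fun _ => (1 : ℝ)) : ℝ × (Fin ℓ → ℝ)))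
        (nhdsWithin 0 (Set.Ioi 0)) (nhds (v, (0 : Fin ℓ → ℝ))) ∧
      (b ⟨0, hℓ⟩, (0 : Fin ℓ → ℝ)) ∈ Ubar ℓ b ∧
      ∀ lam ∈ Set.Ioo (0 : ℝ) 1,
        ((b ⟨ℓ - 1, Nat.sub_lt hℓ Nat.one_pos⟩ + (v - b ⟨0, hℓ⟩) / lam,
          fun _ => (1 : ℝ)) : ℝ × (Fin ℓ → ℝ)) ∈ Ubar ℓ b) := by
  set first : Fin ℓ := ⟨0, hℓ⟩
  set last : Fin ℓ := ⟨ℓ - 1, Nat.sub_lt hℓ Nat.one_pos⟩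
  have mem_low : ∀ u ≤ b first, (u, (0 : Fin ℓ → ℝ)) ∈ Ubar ℓ b := fun u hu =>
    mk_zero_mem_Ubar fun j => hu.trans (hb.monotone (Fin.le_def.2 (Nat.zero_le _)))
  have mem_high : b first < v → ∀ lam ∈ Set.Ioo (0 : ℝ) 1,
      ((b last + (v - b first) / lam, fun _ => (1 : ℝ)) : ℝ × (Fin ℓ → ℝ)) ∈ Ubar ℓ b :=
    fun hv lam hlam => mk_one_mem_Ubar fun j =>
      (hb.monotone (Fin.le_def.2 (Nat.le_sub_one_of_lt j.isLt))).trans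
        (le_add_of_nonneg_right (div_pos (sub_pos.2 hv) hlam.1).le)
  have htend : Filter.Tendsto (fun lam : ℝ =>
      (1 - lam) • ((b first, (0 : Fin ℓ → ℝ)) : ℝ × (Fin ℓ → ℝ)) +
        lam • ((b last + (v - b first) / lam, fun _ => (1 : ℝ)) : ℝ × (Fin ℓ → ℝ)))
      (nhdsWithin 0 (Set.Ioi 0)) (nhds (v, (0 : Fin ℓ → ℝ))) := by
    have h := (tendsto_sub_smul_add_smul_add_inv_smul (b first, (0 : Fin ℓ → ℝ))
      (b last, fun _ => (1 : ℝ)) (v - b first, 0)).mono_left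
        (nhdsGT_le_nhdsNE 0)
    rw [Prod.mk_add_mk, add_sub_cancel, add_zero] at h
    convert h using 2 with lam
    ext <;> simp [div_eq_inv_mul]
  refine ⟨?_, mem_low v, fun hv => ⟨htend, mem_low _ le_rfl, mem_high hv⟩⟩
  rcases le_or_gt v (b first) with hv | hv
  · exact subset_closure (subset_convexHull ℝ _ (mem_low v hv))
  · refine mem_closure_of_tendsto htend ?_
    filter_upwards [Ioo_mem_nhdsGT (zero_lt_one' ℝ)] with lam hlam
    exact convex_convexHull ℝ _ (subset_convexHull ℝ _ (mem_low _ le_rfl))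
      (subset_convexHull ℝ _ (mem_high hv lam hlam)) (by linarith [hlam.2]) hlam.1.le
      (by ring)
end

section
/- The closed convex hull of Ū is exactly {(v, z) ∈ ℝ × [0,1]^ℓ : z_{j+1} ≤ z_j for all j ∈ [ℓ−1]}. -/
open Finset

theorem sum_range_sub_mul_ite_lt {R : Type*} [Ring R] (A : ℕ → R) {j n : ℕ} (hj : j < n) :
    ∑ k ∈ range n, (A k - A (k + 1)) * (if j < k then 1 else 0) = A (j + 1) - A n := by
  have hfilter : (range n).filter (j < ·) = Ico (j + 1) n := by
    ext k; simp only [mem_filter, mem_range, mem_Ico]; omega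
  simp only [mul_ite, mul_one, mul_zero]
  rw [← sum_filter, hfilter, ← neg_sub (A n), ← sum_Ico_sub A hj, ← sum_neg_distrib]
  simp only [neg_sub]

section

variable {ℓ : ℕ} {b : Fin ℓ → ℝ}

def staircase (ℓ : ℕ) : Set (Fin ℓ → ℝ) :=
  {z | (∀ j, z j ∈ Set.Icc (0 : ℝ) 1) ∧
    ∀ j : Fin ℓ, ∀ h : (j : ℕ) + 1 < ℓ, z ⟨(j : ℕ) + 1, h⟩ ≤ z j}

theorem convex_staircase : Convex ℝ (staircase ℓ) := by
  rintro z ⟨hz, hz'⟩ y ⟨hy, hy'⟩ a c ha hc hac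
  refine ⟨fun j => ⟨?_, ?_⟩, fun j h => ?_⟩ <;>
    simp only [Pi.add_apply, Pi.smul_apply, smul_eq_mul]
  · nlinarith [(hz j).1, (hy j).1]
  · nlinarith [(hz j).2, (hy j).2]
  · nlinarith [hz' j h, hy' j h]

theorem isClosed_staircase : IsClosed (staircase ℓ) := by
  simp only [staircase, Set.ofPred_and, Set.ofPred_forall]
  exact (isClosed_iInter fun j => isClosed_Icc.preimage (continuous_apply j)).inter
    (isClosed_iInter fun j => isClosed_iInter fun h =>
      isClosed_le (continuous_apply _) (continuous_apply _))

theorem Ubar_subset_preimage_snd_staircase (hb : StrictMono b) :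
    Ubar ℓ b ⊆ Prod.snd ⁻¹' staircase ℓ := by
  rintro ⟨v, z⟩ ⟨hbin, hsign⟩
  dsimp only at hbin hsign
  refine ⟨fun j => ?_, fun j h => ?_⟩
  · rcases hbin j with hj | hj <;> simp [hj]
  set j' : Fin ℓ := ⟨(j : ℕ) + 1, h⟩
  rcases hbin j' with h' | h'
  · rcases hbin j with hj | hj <;> simp [h', hj]
  rcases hbin j with hj | hj
  · have hvj : v ≤ b j := by simpa [hj] using (hsign j).2
    have hvj' : b j' ≤ v := by simpa [h'] using (hsign j').1
    have hjj' : b j < b j' := hb (Fin.lt_def.mpr (Nat.lt_succ_self _))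
    linarith
  · simp [h', hj]

def stair (ℓ k : ℕ) : Fin ℓ → ℝ := fun j => if (j : ℕ) < k then 1 else 0

theorem mk_stair_mem_Ubar {v : ℝ} {k : ℕ} (hlow : ∀ j : Fin ℓ, (j : ℕ) < k → b j ≤ v)
    (hup : ∀ j : Fin ℓ, k ≤ (j : ℕ) → v ≤ b j) : (v, stair ℓ k) ∈ Ubar ℓ b := by
  refine ⟨fun j => ?_, fun j => ?_⟩ <;> by_cases hj : (j : ℕ) < k <;>
    simp only [stair, hj, if_true, if_false, true_or, or_true]
  · have := hlow j hj; constructor <;> linarith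
  · have := hup j (not_lt.mp hj); constructor <;> linarith

/-- The sequence `1, z₀, …, z_{ℓ-1}, 0, 0, …`, whose consecutive differences are the
barycentric weights of `z` with respect to the vertices `stair ℓ k`. -/
def padSeq (z : Fin ℓ → ℝ) : ℕ → ℝ
  | 0 => 1
  | k + 1 => if h : k < ℓ then z ⟨k, h⟩ else 0

theorem sum_padSeq_sub_smul_stair (z : Fin ℓ → ℝ) :
    ∑ k ∈ range (ℓ + 1), (padSeq z k - padSeq z (k + 1)) • stair ℓ k = z := by
  ext j
  simp only [Finset.sum_apply, Pi.smul_apply, smul_eq_mul, stair]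
  rw [sum_range_sub_mul_ite_lt _ (by omega)]
  simp [padSeq]

theorem sum_padSeq_sub (z : Fin ℓ → ℝ) :
    ∑ k ∈ range (ℓ + 1), (padSeq z k - padSeq z (k + 1)) = 1 := by
  rw [sum_range_sub']
  simp [padSeq]

theorem padSeq_succ_le {z : Fin ℓ → ℝ} (hz : z ∈ staircase ℓ) (k : ℕ) :
    padSeq z (k + 1) ≤ padSeq z k := by
  rcases k with _ | k
  · by_cases h : 0 < ℓ <;> simp [padSeq, h, (hz.1 _).2]
  · by_cases h : k + 1 < ℓ
    · simpa [padSeq, h, show k < ℓ by omega] using hz.2 ⟨k, by omega⟩ h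
    · by_cases h' : k < ℓ <;> simp [padSeq, h, h', (hz.1 _).1]

theorem mk_sum_smul_stair_mem_convexHull_Ubar (hb : Monotone b) {w : ℕ → ℝ}
    (hw : ∀ k, 0 ≤ w k) (hw1 : ∑ k ∈ range (ℓ + 1), w k = 1) (hw0 : 0 < w 0) (hwℓ : 0 < w ℓ)
    (v : ℝ) :
    (v, ∑ k ∈ range (ℓ + 1), w k • stair ℓ k) ∈ convexHull ℝ (Ubar ℓ b) := by
  let base : ℕ → ℝ := fun k => if h : k < ℓ then b ⟨k, h⟩ else ⨆ j, b j
  have hbase_low (k : ℕ) (j : Fin ℓ) (hj : (j : ℕ) < k) : b j ≤ base k := by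
    by_cases h : k < ℓ
    · simpa [base, h] using hb (Fin.le_def.mpr hj.le)
    · simpa [base, h] using le_ciSup (Finite.bddAbove_range b) j
  have hbase_up (k : ℕ) (j : Fin ℓ) (hj : k ≤ (j : ℕ)) : base k ≤ b j := by
    simpa [base, show k < ℓ by omega] using hb (Fin.le_def.mpr hj)
  -- The end vertices `stair ℓ 0` and `stair ℓ ℓ` carry half-lines of admissible `v`;
  -- shifting them along those half-lines absorbs the defect `D`.
  set D := v - ∑ k ∈ range (ℓ + 1), w k * base k
  let V : ℕ → ℝ := fun k => base k + (if k = 0 then min 0 D / w 0 else 0) +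
    (if k = ℓ then max 0 D / w ℓ else 0)
  have hshift₀ : min 0 D / w 0 ≤ 0 := div_nonpos_of_nonpos_of_nonneg (min_le_left 0 D) hw0.le
  have hshiftℓ : 0 ≤ max 0 D / w ℓ := div_nonneg (le_max_left 0 D) hwℓ.le
  have hV (k : ℕ) : (V k, stair ℓ k) ∈ Ubar ℓ b := by
    refine mk_stair_mem_Ubar (fun j hj => ?_) (fun j hj => ?_)
    · have := hbase_low k j hj
      simp only [V, if_neg (show k ≠ 0 by omega)]
      split_ifs <;> linarith
    · have := hbase_up k j hj
      simp only [V, if_neg (show k ≠ ℓ by omega)]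
      split_ifs <;> linarith
  have hVsum : ∑ k ∈ range (ℓ + 1), w k * V k = v := by
    simp only [V, mul_add, sum_add_distrib, mul_ite, mul_zero, sum_ite_eq', mem_range,
      if_pos (Nat.succ_pos ℓ), if_pos (Nat.lt_succ_self ℓ)]
    rw [mul_div_cancel₀ _ hw0.ne', mul_div_cancel₀ _ hwℓ.ne', add_assoc, min_add_max]
    ring
  have := (convex_convexHull ℝ (Ubar ℓ b)).sum_mem (fun k _ => hw k) hw1
    (fun k _ => subset_convexHull ℝ _ (hV k))
  convert this using 1
  ext1 <;> simp [Prod.fst_sum, Prod.snd_sum, hVsum]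

theorem mem_convexHull_Ubar_of_mem_Ioo (hb : Monotone b) {p : ℝ × (Fin ℓ → ℝ)}
    (hp : p.2 ∈ staircase ℓ) (hp' : ∀ j, p.2 j ∈ Set.Ioo 0 1) :
    p ∈ convexHull ℝ (Ubar ℓ b) := by
  obtain ⟨v, z⟩ := p
  have hw0 : 0 < padSeq z 0 - padSeq z 1 := by
    by_cases h : 0 < ℓ <;> simp [padSeq, h, (hp' _).2]
  have hwℓ : 0 < padSeq z ℓ - padSeq z (ℓ + 1) := by
    cases ℓ <;> simp [padSeq, (hp' _).1]
  have := mk_sum_smul_stair_mem_convexHull_Ubar hb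
    (fun k => sub_nonneg.mpr (padSeq_succ_le hp k)) (sum_padSeq_sub z) hw0 hwℓ v
  rwa [sum_padSeq_sub_smul_stair] at this

theorem preimage_snd_staircase_subset_closure_convexHull_Ubar (hb : Monotone b) :
    Prod.snd ⁻¹' staircase ℓ ⊆ closure (convexHull ℝ (Ubar ℓ b)) := by
  rintro ⟨v, z⟩ hz
  -- Pull `z` toward the centre of the cube, where `mem_convexHull_Ubar_of_mem_Ioo` applies.
  let c : Fin ℓ → ℝ := fun _ => 1 / 2
  have hc : c ∈ staircase ℓ := ⟨fun _ => by norm_num [c], fun _ _ => le_rfl⟩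
  have hseg : openSegment ℝ (v, c) (v, z) ⊆ convexHull ℝ (Ubar ℓ b) := by
    rintro _ ⟨s, t, hs, ht, hst, rfl⟩
    refine mem_convexHull_Ubar_of_mem_Ioo hb (convex_staircase hc hz hs.le ht.le hst) fun j => ?_
    have := hz.1 j
    simp only [Prod.snd_add, Prod.smul_snd, Pi.add_apply, Pi.smul_apply, smul_eq_mul, c,
      Set.mem_Icc, Set.mem_Ioo] at this ⊢
    constructor <;> nlinarith
  exact closure_mono hseg (segment_subset_closure_openSegment (right_mem_segment ℝ _ _))

end

theorem stmt5_general (ℓ : ℕ) (b : Fin ℓ → ℝ) (hb : StrictMono b) :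
    closure (convexHull ℝ (Ubar ℓ b)) =
      {uz : ℝ × (Fin ℓ → ℝ) | (∀ j, uz.2 j ∈ Set.Icc (0 : ℝ) 1) ∧
        ∀ j : Fin ℓ, ∀ h : (j : ℕ) + 1 < ℓ, uz.2 ⟨(j : ℕ) + 1, h⟩ ≤ uz.2 j} := by
  refine subset_antisymm ?_ (preimage_snd_staircase_subset_closure_convexHull_Ubar hb.monotone)
  refine closure_minimal (convexHull_min (Ubar_subset_preimage_snd_staircase hb) ?_)
    (isClosed_staircase.preimage continuous_snd)
  exact convex_staircase.linear_preimage (LinearMap.snd ℝ ℝ (Fin ℓ → ℝ))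

/-- `cl conv(Ū) = {(v, z) ∈ ℝ × [0,1]^ℓ : z_{j+1} ≤ z_j ∀ j ∈ [ℓ−1]}`. -/
theorem stmt5 (ℓ : ℕ) (hℓ : 1 ≤ ℓ) (b : Fin ℓ → ℝ) (hb : StrictMono b) :
    closure (convexHull ℝ (Ubar ℓ b)) =
      {uz : ℝ × (Fin ℓ → ℝ) | (∀ j, uz.2 j ∈ Set.Icc (0 : ℝ) 1) ∧
        ∀ j : Fin ℓ, ∀ h : (j : ℕ) + 1 < ℓ, uz.2 ⟨(j : ℕ) + 1, h⟩ ≤ uz.2 j} :=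
  stmt5_general ℓ b hb
end

section
/- Let (v, z) ∈ ℝ × {0,1}^ℓ satisfy (v − b_j) z_j ≥ 0 and (b_j − v)(1 − z_j) ≥ 0 for all j ∈ [ℓ]. Define p_j = max{0, min{v, b_{j+1}} − b_j} for j ∈ [ℓ−1]. Then (b_{j+1} − b_j) z_{j+1} ≤ p_j ≤ (b_{j+1} − b_j) z_j for all j ∈ [ℓ−1]. -/
lemma indicator_cases {b v z : ℝ} (hz : z = 0 ∨ z = 1) (hle : 0 ≤ (v - b) * z)
    (hge : 0 ≤ (b - v) * (1 - z)) : z = 0 ∧ v ≤ b ∨ z = 1 ∧ b ≤ v := by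
  rcases hz with rfl | rfl
  · exact Or.inl ⟨rfl, by linarith⟩
  · exact Or.inr ⟨rfl, by linarith⟩

/-- `max 0 (min v b₁ - b₀)` is the length of `[b₀, b₁] ∩ (-∞, v]`: the whole segment when `v`
lies past `b₁` (`z₁ = 1`), nothing when `v` lies before `b₀` (`z₀ = 0`). -/
lemma mul_indicator_le_segment_part_le {b₀ b₁ v z₀ z₁ : ℝ} (hb : b₀ ≤ b₁)
    (hz₀ : z₀ = 0 ∨ z₀ = 1) (hle₀ : 0 ≤ (v - b₀) * z₀) (hge₀ : 0 ≤ (b₀ - v) * (1 - z₀))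
    (hz₁ : z₁ = 0 ∨ z₁ = 1) (hle₁ : 0 ≤ (v - b₁) * z₁) (hge₁ : 0 ≤ (b₁ - v) * (1 - z₁)) :
    (b₁ - b₀) * z₁ ≤ max 0 (min v b₁ - b₀) ∧ max 0 (min v b₁ - b₀) ≤ (b₁ - b₀) * z₀ := by
  rcases indicator_cases hz₁ hle₁ hge₁ with ⟨rfl, hv₁⟩ | ⟨rfl, hv₁⟩
  · rw [min_eq_left hv₁, mul_zero]
    refine ⟨le_max_left _ _, ?_⟩
    rcases indicator_cases hz₀ hle₀ hge₀ with ⟨rfl, hv₀⟩ | ⟨rfl, hv₀⟩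
    · rw [mul_zero, max_eq_left (by linarith)]
    · rw [mul_one, max_eq_right (by linarith)]
      linarith
  · rw [min_eq_right hv₁, mul_one, max_eq_right (by linarith)]
    refine ⟨le_rfl, ?_⟩
    rcases indicator_cases hz₀ hle₀ hge₀ with ⟨rfl, hv₀⟩ | ⟨rfl, hv₀⟩
    · linarith
    · rw [mul_one]

theorem stmt8_general (ℓ : ℕ) (b : ℕ → ℝ)
    (hb : ∀ j, 1 ≤ j → j < ℓ → b j < b (j + 1))
    (v : ℝ) (z : ℕ → ℝ)
    (hz01 : ∀ j, 1 ≤ j → j ≤ ℓ → z j = 0 ∨ z j = 1)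
    (hzv : ∀ j, 1 ≤ j → j ≤ ℓ → 0 ≤ (v - b j) * z j)
    (hvz : ∀ j, 1 ≤ j → j ≤ ℓ → 0 ≤ (b j - v) * (1 - z j))
    (p : ℕ → ℝ)
    (hp : ∀ j, 1 ≤ j → j ≤ ℓ - 1 → p j = max 0 (min v (b (j + 1)) - b j)) :
    ∀ j, 1 ≤ j → j ≤ ℓ - 1 →
      (b (j + 1) - b j) * z (j + 1) ≤ p j ∧ p j ≤ (b (j + 1) - b j) * z j := by
  intro j hj hjℓ
  rw [hp j hj hjℓ]
  have hj₀ : j ≤ ℓ := by omega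
  have hj₁ : j + 1 ≤ ℓ := by omega
  exact mul_indicator_le_segment_part_le (hb j hj (by omega)).le
    (hz01 j hj hj₀) (hzv j hj hj₀) (hvz j hj hj₀)
    (hz01 (j + 1) (by omega) hj₁) (hzv (j + 1) (by omega) hj₁) (hvz (j + 1) (by omega) hj₁)

/-- Let `(v, z) ∈ ℝ × {0,1}^ℓ` satisfy `(v − b_j) z_j ≥ 0` and `(b_j − v)(1 − z_j) ≥ 0`
for all `j ∈ [ℓ]`, and let `p_j = max{0, min{v, b_{j+1}} − b_j}` for `j ∈ [ℓ−1]`.  Then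
`(b_{j+1} − b_j) z_{j+1} ≤ p_j ≤ (b_{j+1} − b_j) z_j` for all `j ∈ [ℓ−1]`. -/
theorem stmt8 (ℓ : ℕ) (hℓ : 2 ≤ ℓ) (b : ℕ → ℝ)
    (hb : ∀ j, 1 ≤ j → j < ℓ → b j < b (j + 1))
    (v : ℝ) (z : ℕ → ℝ)
    (hz01 : ∀ j, 1 ≤ j → j ≤ ℓ → z j = 0 ∨ z j = 1)
    (hzv : ∀ j, 1 ≤ j → j ≤ ℓ → 0 ≤ (v - b j) * z j)
    (hvz : ∀ j, 1 ≤ j → j ≤ ℓ → 0 ≤ (b j - v) * (1 - z j))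
    (p : ℕ → ℝ)
    (hp : ∀ j, 1 ≤ j → j ≤ ℓ - 1 → p j = max 0 (min v (b (j + 1)) - b j)) :
    ∀ j, 1 ≤ j → j ≤ ℓ - 1 →
      (b (j + 1) - b j) * z (j + 1) ≤ p j ∧ p j ≤ (b (j + 1) - b j) * z j :=
  stmt8_general ℓ b hb v z hz01 hzv hvz p hp
end

section
/- (Validity of the extended formulation.) If (v, z, s) ∈ X, then there exists (p_0, p_1, ..., p_ℓ) ∈ ℝ_+^{ℓ+1} — namely p_0 = max{0, b_1 − v}, p_j = max{0, min{v, b_{j+1}} − b_j} for j ∈ [ℓ−1], p_ℓ = max{0, v − b_ℓ} — such that: (i) v = b_1 − p_0 + Σ_{j=1}^ℓ p_j; (ii) (b_{j+1} − b_j) z_{j+1} ≤ p_j ≤ (b_{j+1} − b_j) z_j for all j ∈ [ℓ−1]; and (iii) s ≥ (1 − z_1) ℒ(b_1 − p_0/(1 − z_1)) + Σ_{j=1}^{ℓ−1} (z_j − z_{j+1}) ℒ(b_j + (p_j − z_{j+1}(b_{j+1} − b_j))/(z_j − z_{j+1})) + z_ℓ ℒ(b_ℓ + p_ℓ/z_ℓ),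 where any term with zero multiplier is taken equal to 0 (and for this choice of p, every term with zero multiplier also has zero numerator). -/
/-!
With `p_j = min v b_{j+1} - min v b_j` for `1 ≤ j < ℓ`, the identity (i) telescopes. Each binary
`z_j` records on which side of `b_j` the point `v` lies, and in every case the numerator of a
perspective term is its multiplier `α` times `v - c`, where `c` is the term's base point. Hence every
term of (iii) equals `α ℒ(v)` (both sides vanish when `α = 0`), and since the multipliers
`1 - z_1, z_1 - z_2, …, z_{ℓ-1} - z_ℓ, z_ℓ` telescope to `1`, the right-hand side of (iii) is `ℒ(v) ≤ s`.
-/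

open Finset

namespace ExtendedFormulation

theorem sum_Icc_one_sub_one_sub {M : Type*} [AddCommGroup M] (f : ℕ → M) {ℓ : ℕ} (hℓ : 1 ≤ ℓ) :
    ∑ j ∈ Icc 1 (ℓ - 1), (f (j + 1) - f j) = f ℓ - f 1 := by
  rw [← Ico_add_one_right_eq_Icc, Nat.sub_add_cancel hℓ, sum_Ico_sub f hℓ]

theorem mul_apply_eq_mul_apply {α : Type*} (f : α → ℝ) {a : ℝ} {x y : α} (h : a ≠ 0 → x = y) :
    a * f x = a * f y := by
  rcases eq_or_ne a 0 with ha | ha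
  · simp [ha]
  · rw [h ha]

theorem perspective_sum_eq {ℓ : ℕ} (hℓ : 1 ≤ ℓ) {b z p : ℕ → ℝ} {v : ℝ}
    (h₀ : p 0 = (1 - z 1) * (b 1 - v))
    (hmid : ∀ j, 1 ≤ j → j ≤ ℓ - 1 →
      p j - z (j + 1) * (b (j + 1) - b j) = (z j - z (j + 1)) * (v - b j))
    (hℓp : p ℓ = z ℓ * (v - b ℓ)) (L : ℝ → ℝ) :
    (1 - z 1) * L (b 1 - p 0 / (1 - z 1)) +
      (∑ j ∈ Icc 1 (ℓ - 1),
        (z j - z (j + 1)) * L (b j + (p j - z (j + 1) * (b (j + 1) - b j)) / (z j - z (j + 1)))) +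
      z ℓ * L (b ℓ + p ℓ / z ℓ) = L v := by
  have hfirst : (1 - z 1) * L (b 1 - p 0 / (1 - z 1)) = (1 - z 1) * L v :=
    mul_apply_eq_mul_apply L fun h => by rw [h₀]; field_simp; ring
  have hsegment : ∀ j ∈ Icc 1 (ℓ - 1), (z j - z (j + 1)) *
      L (b j + (p j - z (j + 1) * (b (j + 1) - b j)) / (z j - z (j + 1))) =
      (z j - z (j + 1)) * L v := fun j hj =>
    mul_apply_eq_mul_apply L fun h => by
      rw [hmid j (mem_Icc.mp hj).1 (mem_Icc.mp hj).2]; field_simp; ring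
  have hlast : z ℓ * L (b ℓ + p ℓ / z ℓ) = z ℓ * L v :=
    mul_apply_eq_mul_apply L fun h => by rw [hℓp]; field_simp; ring
  have hmultipliers : ∑ j ∈ Icc 1 (ℓ - 1), (z j - z (j + 1)) = z 1 - z ℓ := by
    rw [← neg_sub (z ℓ), ← sum_Icc_one_sub_one_sub z hℓ, ← sum_neg_distrib]
    simp only [neg_sub]
  rw [hfirst, sum_congr rfl hsegment, hlast, ← sum_mul, hmultipliers]
  ring

/-- `z` is a binary indicator of `c ≤ v`; at `v = c` both values are allowed. -/
def IsSideIndicator (c v z : ℝ) : Prop := (z = 0 ∧ v ≤ c) ∨ (z = 1 ∧ c ≤ v)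

theorem isSideIndicator_of_binary {c v z : ℝ} (hz : z = 0 ∨ z = 1) (h₁ : 0 ≤ (v - c) * z)
    (h₀ : 0 ≤ (c - v) * (1 - z)) : IsSideIndicator c v z := by
  rcases hz with rfl | rfl
  · exact Or.inl ⟨rfl, by linarith⟩
  · exact Or.inr ⟨rfl, by linarith⟩

section Segment

variable {v a c za zc : ℝ}

theorem max_zero_sub_eq_one_sub_mul (hc : IsSideIndicator c v zc) :
    max 0 (c - v) = (1 - zc) * (c - v) := by
  rcases hc with ⟨rfl, h⟩ | ⟨rfl, h⟩ <;> simp [h]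

theorem max_zero_sub_eq_mul (hc : IsSideIndicator c v zc) : max 0 (v - c) = zc * (v - c) := by
  rcases hc with ⟨rfl, h⟩ | ⟨rfl, h⟩ <;> simp [h]

theorem max_zero_min_sub_eq_min_sub_min (hac : a ≤ c) :
    max 0 (min v c - a) = min v c - min v a := by
  rcases le_total v a with h | h
  · simp [min_eq_left (h.trans hac), h]
  · rw [min_eq_right h, max_eq_right (by simpa using le_min h hac)]

theorem mul_le_max_zero_min_sub (hc : IsSideIndicator c v zc) :
    (c - a) * zc ≤ max 0 (min v c - a) := by
  rcases hc with ⟨rfl, -⟩ | ⟨rfl, h⟩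
  · simp
  · simp [min_eq_right h]

theorem max_zero_min_sub_le_mul (hac : a ≤ c) (ha : IsSideIndicator a v za) :
    max 0 (min v c - a) ≤ (c - a) * za := by
  rcases ha with ⟨rfl, h⟩ | ⟨rfl, -⟩
  · simp [(min_le_left v c).trans h]
  · exact max_le (by linarith) (by linarith [min_le_right v c])

/-- The numerator of the perspective term of the segment `[a, c]`. -/
theorem max_zero_min_sub_sub_mul (hac : a ≤ c) (ha : IsSideIndicator a v za)
    (hc : IsSideIndicator c v zc) :
    max 0 (min v c - a) - zc * (c - a) = (za - zc) * (v - a) := by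
  rw [max_zero_min_sub_eq_min_sub_min hac]
  rcases ha with ⟨rfl, ha⟩ | ⟨rfl, ha⟩ <;> rcases hc with ⟨rfl, hc⟩ | ⟨rfl, hc⟩
  · simp [min_eq_left ha, min_eq_left hc]
  · simp [min_eq_left ha, min_eq_right hc]
  · simp [min_eq_right ha, min_eq_left hc]
  · simp [min_eq_right ha, min_eq_right hc]

end Segment

noncomputable def extendedPoint (ℓ : ℕ) (b : ℕ → ℝ) (v : ℝ) (j : ℕ) : ℝ :=
  if j = 0 then max 0 (b 1 - v)
  else if j = ℓ then max 0 (v - b ℓ)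
  else max 0 (min v (b (j + 1)) - b j)

section ExtendedPoint

variable {ℓ : ℕ} {b : ℕ → ℝ} {v : ℝ}

theorem extendedPoint_zero : extendedPoint ℓ b v 0 = max 0 (b 1 - v) := rfl

theorem extendedPoint_self (hℓ : 1 ≤ ℓ) : extendedPoint ℓ b v ℓ = max 0 (v - b ℓ) := by
  simp [extendedPoint, Nat.one_le_iff_ne_zero.mp hℓ]

theorem extendedPoint_of_le_sub_one {j : ℕ} (hj : 1 ≤ j) (hjℓ : j ≤ ℓ - 1) :
    extendedPoint ℓ b v j = max 0 (min v (b (j + 1)) - b j) := by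
  simp [extendedPoint, show j ≠ 0 by omega, show j ≠ ℓ by omega]

theorem extendedPoint_nonneg (j : ℕ) : 0 ≤ extendedPoint ℓ b v j := by
  unfold extendedPoint
  split_ifs <;> exact le_max_left _ _

theorem sub_extendedPoint_zero_add_sum (hℓ : 1 ≤ ℓ)
    (hb : ∀ j, 1 ≤ j → j ≤ ℓ - 1 → b j ≤ b (j + 1)) :
    b 1 - extendedPoint ℓ b v 0 + ∑ j ∈ Icc 1 ℓ, extendedPoint ℓ b v j = v := by
  have hmid : ∑ j ∈ Icc 1 (ℓ - 1), extendedPoint ℓ b v j = min v (b ℓ) - min v (b 1) := by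
    rw [← sum_Icc_one_sub_one_sub (fun j => min v (b j)) hℓ]
    refine sum_congr rfl fun j hj => ?_
    obtain ⟨hj1, hjℓ⟩ := mem_Icc.mp hj
    rw [extendedPoint_of_le_sub_one hj1 hjℓ, max_zero_min_sub_eq_min_sub_min (hb j hj1 hjℓ)]
  obtain ⟨m, rfl⟩ : ∃ m, ℓ = m + 1 := ⟨ℓ - 1, by omega⟩
  rw [Nat.add_sub_cancel] at hmid
  rw [sum_Icc_succ_top (by omega), hmid, extendedPoint_zero, extendedPoint_self hℓ]
  rcases le_total v (b 1) with h₁ | h₁ <;> rcases le_total v (b (m + 1)) with h₂ | h₂ <;>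
    simp [h₁, h₂]

theorem extendedPoint_bounds {j : ℕ} (hj : 1 ≤ j) (hjℓ : j ≤ ℓ - 1) (hb : b j ≤ b (j + 1))
    {za zc : ℝ} (ha : IsSideIndicator (b j) v za) (hc : IsSideIndicator (b (j + 1)) v zc) :
    (b (j + 1) - b j) * zc ≤ extendedPoint ℓ b v j ∧
      extendedPoint ℓ b v j ≤ (b (j + 1) - b j) * za := by
  rw [extendedPoint_of_le_sub_one hj hjℓ]
  exact ⟨mul_le_max_zero_min_sub hc, max_zero_min_sub_le_mul hb ha⟩

theorem extendedPoint_sub_mul_eq_mul {j : ℕ} (hj : 1 ≤ j) (hjℓ : j ≤ ℓ - 1)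
    (hb : b j ≤ b (j + 1)) {za zc : ℝ} (ha : IsSideIndicator (b j) v za)
    (hc : IsSideIndicator (b (j + 1)) v zc) :
    extendedPoint ℓ b v j - zc * (b (j + 1) - b j) = (za - zc) * (v - b j) := by
  rw [extendedPoint_of_le_sub_one hj hjℓ]
  exact max_zero_min_sub_sub_mul hb ha hc

theorem extendedPoint_zero_eq_mul {z : ℝ} (hz : IsSideIndicator (b 1) v z) :
    extendedPoint ℓ b v 0 = (1 - z) * (b 1 - v) :=
  max_zero_sub_eq_one_sub_mul hz

theorem extendedPoint_self_eq_mul (hℓ : 1 ≤ ℓ) {z : ℝ} (hz : IsSideIndicator (b ℓ) v z) :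
    extendedPoint ℓ b v ℓ = z * (v - b ℓ) :=
  (extendedPoint_self hℓ).trans (max_zero_sub_eq_mul hz)

end ExtendedPoint

end ExtendedFormulation

open ExtendedFormulation in
/-- Validity of the extended formulation.  If `(v, z, s) ∈ X`, then
`p₀ = max{0, b₁ − v}`, `p_j = max{0, min{v, b_{j+1}} − b_j}` (`j ∈ [ℓ−1]`),
`p_ℓ = max{0, v − b_ℓ}` are nonnegative and satisfy the telescoping identity,
the bound constraints, and the perspective inequality; moreover every term with
zero multiplier also has zero numerator.  (In Lean, real division by zero is zero,
so a term `α * ℒ(b + u/α)` with `α = 0` equals `0`, matching the convention that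
terms with zero multiplier are taken equal to `0`.) -/
theorem stmt10 (ℓ : ℕ) (hℓ : 1 ≤ ℓ) (b : ℕ → ℝ)
    (hb : ∀ j, 1 ≤ j → j < ℓ → b j < b (j + 1))
    (L : ℝ → ℝ) (v : ℝ) (z : ℕ → ℝ) (s : ℝ)
    (hz01 : ∀ j, 1 ≤ j → j ≤ ℓ → z j = 0 ∨ z j = 1)
    (hLs : L v ≤ s)
    (hzv : ∀ j, 1 ≤ j → j ≤ ℓ → 0 ≤ (v - b j) * z j)
    (hvz : ∀ j, 1 ≤ j → j ≤ ℓ → 0 ≤ (b j - v) * (1 - z j)) :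
    ∃ p : ℕ → ℝ,
      p 0 = max 0 (b 1 - v) ∧
      (∀ j, 1 ≤ j → j ≤ ℓ - 1 → p j = max 0 (min v (b (j + 1)) - b j)) ∧
      p ℓ = max 0 (v - b ℓ) ∧
      (∀ j, j ≤ ℓ → 0 ≤ p j) ∧
      v = b 1 - p 0 + ∑ j ∈ Finset.Icc 1 ℓ, p j ∧
      (∀ j, 1 ≤ j → j ≤ ℓ - 1 →
        (b (j + 1) - b j) * z (j + 1) ≤ p j ∧ p j ≤ (b (j + 1) - b j) * z j) ∧
      (1 - z 1) * L (b 1 - p 0 / (1 - z 1)) +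
          (∑ j ∈ Finset.Icc 1 (ℓ - 1),
            (z j - z (j + 1)) *
              L (b j + (p j - z (j + 1) * (b (j + 1) - b j)) / (z j - z (j + 1)))) +
          z ℓ * L (b ℓ + p ℓ / z ℓ) ≤ s ∧
      (1 - z 1 = 0 → p 0 = 0) ∧
      (∀ j, 1 ≤ j → j ≤ ℓ - 1 → z j - z (j + 1) = 0 →
        p j - z (j + 1) * (b (j + 1) - b j) = 0) ∧
      (z ℓ = 0 → p ℓ = 0) := by
  have hmono : ∀ j, 1 ≤ j → j ≤ ℓ - 1 → b j ≤ b (j + 1) := fun j hj hjℓ =>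
    (hb j hj (by omega)).le
  have hside : ∀ j, 1 ≤ j → j ≤ ℓ → IsSideIndicator (b j) v (z j) :=
    fun j hj hjℓ => isSideIndicator_of_binary (hz01 j hj hjℓ) (hzv j hj hjℓ) (hvz j hj hjℓ)
  have hp₀ := extendedPoint_zero_eq_mul (ℓ := ℓ) (hside 1 le_rfl hℓ)
  have hpℓ := extendedPoint_self_eq_mul hℓ (hside ℓ hℓ le_rfl)
  have hpj : ∀ j, 1 ≤ j → j ≤ ℓ - 1 → extendedPoint ℓ b v j - z (j + 1) * (b (j + 1) - b j) =
      (z j - z (j + 1)) * (v - b j) := fun j hj hjℓ =>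
    extendedPoint_sub_mul_eq_mul hj hjℓ (hmono j hj hjℓ) (hside j hj (by omega))
      (hside (j + 1) (by omega) (by omega))
  refine ⟨extendedPoint ℓ b v, extendedPoint_zero, fun j => extendedPoint_of_le_sub_one,
    extendedPoint_self hℓ, fun j _ => extendedPoint_nonneg j,
    (sub_extendedPoint_zero_add_sum hℓ hmono).symm, fun j hj hjℓ => ?_,
    (perspective_sum_eq hℓ hp₀ hpj hpℓ L).trans_le hLs, fun h => by rw [hp₀, h, zero_mul],
    fun j hj hjℓ h => by rw [hpj j hj hjℓ, h, zero_mul], fun h => by rw [hpℓ, h, zero_mul]⟩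
  exact extendedPoint_bounds hj hjℓ (hmono j hj hjℓ) (hside j hj (by omega))
    (hside (j + 1) (by omega) (by omega))
end

section
/- (Conic relaxation validity.) Fix data x_1, ..., x_m ∈ ℝ^n, a subset A ⊆ [m] of cardinality m_1 ≥ 1, breakpoints b_1 < ... < b_ℓ, λ ≥ 0, and losses ℒ_i : ℝ → ℝ with ℒ_i(b_j) finite for all i, j. Then the optimal value of the convex relaxation (8) — minimize Σ_{i=1}^m s_i + λ t over w ∈ ℝ^n, z ∈ [0,1]^{m×ℓ}, p ∈ ℝ^{m×(ℓ+1)}, s ∈ ℝ^m, t ∈ ℝ subject to, for every i ∈ [m]: w·x_i = b_1 − p_{i0} + Σ_{j=1}^ℓ p_{ij}; (b_{j+1} − b_j) z_{i,j+1} ≤ p_{ij} ≤ (b_{j+1} − b_j) z_{ij} for j ∈ [ℓ−1]; p_{i0} ≥ 0, p_{iℓ} ≥ 0; the perspective inequality persp_{ℒ_i}(1 − z_{i1}, −p_{i0}; b_1) + Σ_{j=1}^{ℓ−1} persp_{ℒ_i}(z_{ij} − z_{i,j+1}, p_{ij} − z_{i,j+1}(b_{j+1} − b_j); b_j) + persp_{ℒ_i}(z_{iℓ},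 p_{iℓ}; b_ℓ) ≤ s_i; and, for every j ∈ [ℓ]: (1/m_1) Σ_{i ∈ A} z_{ij} − (1/m) Σ_{i=1}^m z_{ij} ≤ t — is less than or equal to the optimal value of (FR1): minimize over w ∈ ℝ^n of Σ_{i=1}^m ℒ_i(w·x_i) + λ max_{j ∈ [ℓ]} [ (1/m_1) Σ_{i ∈ A} 1(w·x_i > b_j) − (1/m) Σ_{i=1}^m 1(w·x_i > b_j) ]. -/
/-!
Every `w` extends to a feasible point of (8) with the same objective value. Put `v_i = w·x_i`,
`z_ij = 𝟙(v_i > b_j)`, and let `p_i` record how `v_i` splits along the breakpoints: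
`p_{i0} = (b_1 - v_i)⁺`, `p_{ij}` is the length of `[b_j, b_{j+1}] ∩ (-∞, v_i]`, and
`p_{iℓ} = (v_i - b_ℓ)⁺`. Each perspective term then has weight `α ∈ {0, 1}` and offset
`α (v_i - b)`, so it equals `α ℒ_i(v_i)` (using `persp(0, 0) = 0`); the weights telescope to `1`,
so `s_i = ℒ_i(v_i)` is admissible, and `t` can be taken to be the maximum in (FR1).
-/

/-- The closed perspective of `ℒ` anchored at `c`: `persp ℒ c α u = α ℒ(c + u/α)` for
`α > 0`, and for `α = 0` the limit `lim_{t→0⁺} t ℒ(c + u/t)` (realized as a `limsup`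
in `EReal`, which equals the limit whenever the limit exists; `persp ℒ c 0 0 = 0`). -/
noncomputable def persp (L : ℝ → ℝ) (c : ℝ) (α u : ℝ) : EReal :=
  if 0 < α then ((α * L (c + u / α) : ℝ) : EReal)
  else Filter.limsup (fun t : ℝ => ((t * L (c + u / t) : ℝ) : EReal))
    (nhdsWithin 0 (Set.Ioi 0))

open Filter Topology

theorem EReal.coe_finset_sum {ι : Type*} (s : Finset ι) (f : ι → ℝ) :
    ((∑ i ∈ s, f i : ℝ) : EReal) = ∑ i ∈ s, (f i : EReal) :=
  map_sum (⟨⟨(↑), EReal.coe_zero⟩, EReal.coe_add⟩ : ℝ →+ EReal) f s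

theorem Fin.sum_sub_succ_eq {M : Type*} [AddCommGroup M] {ℓ : ℕ} (hℓ : 1 ≤ ℓ) (f : Fin ℓ → M) :
    ∑ k : Fin (ℓ - 1), (f ⟨k, by omega⟩ - f ⟨k + 1, by omega⟩) =
      f ⟨0, hℓ⟩ - f ⟨ℓ - 1, by omega⟩ := by
  let g : ℕ → M := fun k => if h : k < ℓ then f ⟨k, h⟩ else 0
  have hg : ∀ k (h : k < ℓ), f ⟨k, h⟩ = g k := fun k h => by simp [g, h]
  simp only [hg]
  exact (Fin.sum_univ_eq_sum_range (fun k => g k - g (k + 1)) _).trans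
    (Finset.sum_range_sub' g _)

theorem persp_zero_zero (L : ℝ → ℝ) (c : ℝ) : persp L c 0 0 = 0 := by
  have h : Tendsto (fun t : ℝ => t * L (c + 0 / t)) (𝓝[>] 0) (𝓝 0) := by
    simpa using ((continuous_mul_const (L c)).tendsto' 0 0 (zero_mul _)).mono_left
      nhdsWithin_le_nhds
  rw [persp, if_neg (lt_irrefl 0), (EReal.tendsto_coe.mpr h).limsup_eq, EReal.coe_zero]

theorem persp_one (L : ℝ → ℝ) (c u : ℝ) : persp L c 1 u = L (c + u) := by
  simp [persp]

theorem persp_eq_mul_of_eq_zero_or_eq_one (L : ℝ → ℝ) {c v α u : ℝ} (hα : α = 0 ∨ α = 1)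
    (hu : u = α * (v - c)) : persp L c α u = ((α * L v : ℝ) : EReal) := by
  rcases hα with rfl | rfl <;> simp [hu, persp_zero_zero, persp_one]

section Indicator

variable (L : ℝ → ℝ) {a c : ℝ} (v : ℝ)

theorem persp_one_sub_indicator :
    persp L a (1 - if a < v then 1 else 0) (-(a - min v a)) =
      (((1 - if a < v then 1 else 0) * L v : ℝ) : EReal) := by
  refine persp_eq_mul_of_eq_zero_or_eq_one L (by split_ifs <;> simp) ?_
  split_ifs with h
  · simp [min_eq_right h.le]
  · simp [min_eq_left (not_lt.mp h)]

theorem persp_indicator_sub_indicator (hac : a ≤ c) :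
    persp L a ((if a < v then 1 else 0) - if c < v then 1 else 0)
        (min v c - min v a - (if c < v then 1 else 0) * (c - a)) =
      ((((if a < v then 1 else 0) - if c < v then 1 else 0) * L v : ℝ) : EReal) := by
  rcases lt_or_ge c v with hc | hc
  · have ha : a < v := hac.trans_lt hc
    refine persp_eq_mul_of_eq_zero_or_eq_one L (by simp [hc, ha]) ?_
    simp [hc, ha, min_eq_right hc.le, min_eq_right ha.le]
  · rw [if_neg (not_lt.mpr hc), min_eq_left hc]
    refine persp_eq_mul_of_eq_zero_or_eq_one L (by split_ifs <;> simp) ?_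
    split_ifs with ha
    · simp [min_eq_right ha.le]
    · simp [min_eq_left (not_lt.mp ha)]

theorem persp_indicator :
    persp L a (if a < v then 1 else 0) (v - min v a) =
      (((if a < v then 1 else 0) * L v : ℝ) : EReal) := by
  refine persp_eq_mul_of_eq_zero_or_eq_one L (by split_ifs <;> simp) ?_
  split_ifs with h
  · simp [min_eq_right h.le]
  · simp [min_eq_left (not_lt.mp h)]

end Indicator

section Lift

variable {ℓ : ℕ} (b : Fin ℓ → ℝ) (v : ℝ)

noncomputable def breakpointIndicator (j : Fin ℓ) : ℝ := if b j < v then 1 else 0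

def cappedBreakpoint (k : ℕ) : ℝ := if h : k < ℓ then min v (b ⟨k, h⟩) else v

def segmentLength (hℓ : 1 ≤ ℓ) (j : Fin (ℓ + 1)) : ℝ :=
  if (j : ℕ) = 0 then b ⟨0, hℓ⟩ - cappedBreakpoint b v 0
  else cappedBreakpoint b v j - cappedBreakpoint b v (j - 1)

variable {b v}

theorem breakpointIndicator_mem_Icc (j : Fin ℓ) : breakpointIndicator b v j ∈ Set.Icc 0 1 := by
  unfold breakpointIndicator; split_ifs <;> simp

theorem cappedBreakpoint_of_lt {k : ℕ} (h : k < ℓ) :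
    cappedBreakpoint b v k = min v (b ⟨k, h⟩) :=
  dif_pos h

variable (hℓ : 1 ≤ ℓ)

theorem segmentLength_zero : segmentLength b v hℓ 0 = b ⟨0, hℓ⟩ - min v (b ⟨0, hℓ⟩) := by
  simp [segmentLength, cappedBreakpoint_of_lt hℓ]

theorem segmentLength_succ (j : Fin ℓ) :
    segmentLength b v hℓ j.succ = cappedBreakpoint b v (j + 1) - cappedBreakpoint b v j := by
  simp [segmentLength]

theorem segmentLength_last :
    segmentLength b v hℓ (Fin.last ℓ) = v - min v (b ⟨ℓ - 1, by omega⟩) := by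
  simp [segmentLength, cappedBreakpoint, show ℓ ≠ 0 by omega, show 0 < ℓ from hℓ]

theorem segmentLength_zero_nonneg : 0 ≤ segmentLength b v hℓ 0 := by
  simp [segmentLength_zero]

theorem segmentLength_last_nonneg : 0 ≤ segmentLength b v hℓ (Fin.last ℓ) := by
  simp [segmentLength_last]

theorem sub_segmentLength_zero_add_sum :
    b ⟨0, hℓ⟩ - segmentLength b v hℓ 0 + ∑ j : Fin ℓ, segmentLength b v hℓ j.succ = v := by
  simp only [segmentLength_succ, Fin.sum_univ_eq_sum_range
    (fun k => cappedBreakpoint b v (k + 1) - cappedBreakpoint b v k), Finset.sum_range_sub]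
  simp [segmentLength, cappedBreakpoint]

theorem segmentLength_succ_mem_bounds (hb : Monotone b) (j : Fin ℓ) (h : (j : ℕ) + 1 < ℓ) :
    (b ⟨j + 1, h⟩ - b j) * breakpointIndicator b v ⟨j + 1, h⟩ ≤ segmentLength b v hℓ j.succ ∧
      segmentLength b v hℓ j.succ ≤ (b ⟨j + 1, h⟩ - b j) * breakpointIndicator b v j := by
  have hle : b j ≤ b ⟨j + 1, h⟩ := hb (Fin.le_def.mpr (Nat.le_succ _))
  rw [segmentLength_succ, cappedBreakpoint_of_lt h, cappedBreakpoint_of_lt j.isLt]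
  unfold breakpointIndicator
  split_ifs <;> simp only [min_def] <;> split_ifs <;> constructor <;> linarith

end Lift

noncomputable def perspConstraintLHS {ℓ : ℕ} (L : ℝ → ℝ) (hℓ : 1 ≤ ℓ) (b z : Fin ℓ → ℝ)
    (p : Fin (ℓ + 1) → ℝ) : EReal :=
  persp L (b ⟨0, hℓ⟩) (1 - z ⟨0, hℓ⟩) (-(p 0)) +
    (∑ k : Fin (ℓ - 1),
      persp L (b ⟨(k : ℕ), Nat.lt_of_lt_of_le k.isLt (Nat.sub_le ℓ 1)⟩)
        (z ⟨(k : ℕ), Nat.lt_of_lt_of_le k.isLt (Nat.sub_le ℓ 1)⟩ -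
          z ⟨(k : ℕ) + 1, Nat.add_lt_of_lt_sub k.isLt⟩)
        (p ⟨(k : ℕ) + 1, Nat.lt_succ_of_lt (Nat.add_lt_of_lt_sub k.isLt)⟩ -
          z ⟨(k : ℕ) + 1, Nat.add_lt_of_lt_sub k.isLt⟩ *
            (b ⟨(k : ℕ) + 1, Nat.add_lt_of_lt_sub k.isLt⟩ -
              b ⟨(k : ℕ), Nat.lt_of_lt_of_le k.isLt (Nat.sub_le ℓ 1)⟩))) +
    persp L (b ⟨ℓ - 1, Nat.sub_lt hℓ Nat.one_pos⟩) (z ⟨ℓ - 1, Nat.sub_lt hℓ Nat.one_pos⟩)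
      (p (Fin.last ℓ))

theorem perspConstraintLHS_lift {ℓ : ℕ} (L : ℝ → ℝ) (hℓ : 1 ≤ ℓ) {b : Fin ℓ → ℝ}
    (hb : Monotone b) (v : ℝ) :
    perspConstraintLHS L hℓ b (breakpointIndicator b v) (segmentLength b v hℓ) = L v := by
  have hk (k : Fin (ℓ - 1)) : (k : ℕ) < ℓ := Nat.lt_of_lt_of_le k.isLt (Nat.sub_le ℓ 1)
  have hk1 (k : Fin (ℓ - 1)) : (k : ℕ) + 1 < ℓ := Nat.add_lt_of_lt_sub k.isLt
  have hmid (k : Fin (ℓ - 1)) : segmentLength b v hℓ ⟨k + 1, Nat.lt_succ_of_lt (hk1 k)⟩ =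
      min v (b ⟨k + 1, hk1 k⟩) - min v (b ⟨k, hk k⟩) := by
    simp [segmentLength, cappedBreakpoint_of_lt (hk1 k), cappedBreakpoint_of_lt (hk k)]
  have hmono (k : Fin (ℓ - 1)) : b ⟨k, hk k⟩ ≤ b ⟨k + 1, hk1 k⟩ :=
    hb (Fin.le_def.mpr (Nat.le_succ _))
  have htel := Fin.sum_sub_succ_eq hℓ (breakpointIndicator b v)
  unfold perspConstraintLHS
  simp only [breakpointIndicator] at htel ⊢
  simp only [segmentLength_zero, segmentLength_last, hmid, persp_one_sub_indicator,
    persp_indicator, persp_indicator_sub_indicator L v (hmono _)]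
  rw [← EReal.coe_finset_sum, ← EReal.coe_add, ← EReal.coe_add, EReal.coe_eq_coe_iff,
    ← Finset.sum_mul, htel]
  ring

theorem stmt13_general (m n ℓ m₁ : ℕ) (hℓ : 1 ≤ ℓ)
    (x : Fin m → Fin n → ℝ) (A : Finset (Fin m))
    (b : Fin ℓ → ℝ) (hb : StrictMono b) (lam : ℝ)
    (L : Fin m → ℝ → ℝ) :
    sInf {c : EReal |
      ∃ (w : Fin n → ℝ) (z : Fin m → Fin ℓ → ℝ) (p : Fin m → Fin (ℓ + 1) → ℝ)
        (s : Fin m → ℝ) (t : ℝ),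
        (∀ i j, z i j ∈ Set.Icc (0 : ℝ) 1) ∧
        (∀ i, ∑ k, w k * x i k = b ⟨0, hℓ⟩ - p i 0 + ∑ j : Fin ℓ, p i j.succ) ∧
        (∀ i, ∀ j : Fin ℓ, ∀ h : (j : ℕ) + 1 < ℓ,
          (b ⟨(j : ℕ) + 1, h⟩ - b j) * z i ⟨(j : ℕ) + 1, h⟩ ≤ p i j.succ ∧
          p i j.succ ≤ (b ⟨(j : ℕ) + 1, h⟩ - b j) * z i j) ∧
        (∀ i, 0 ≤ p i 0) ∧ (∀ i, 0 ≤ p i (Fin.last ℓ)) ∧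
        (∀ i, persp (L i) (b ⟨0, hℓ⟩) (1 - z i ⟨0, hℓ⟩) (-(p i 0)) +
            (∑ k : Fin (ℓ - 1),
              persp (L i) (b ⟨(k : ℕ), Nat.lt_of_lt_of_le k.isLt (Nat.sub_le ℓ 1)⟩)
                (z i ⟨(k : ℕ), Nat.lt_of_lt_of_le k.isLt (Nat.sub_le ℓ 1)⟩ -
                  z i ⟨(k : ℕ) + 1, Nat.add_lt_of_lt_sub k.isLt⟩)
                (p i ⟨(k : ℕ) + 1, Nat.lt_succ_of_lt (Nat.add_lt_of_lt_sub k.isLt)⟩ -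
                  z i ⟨(k : ℕ) + 1, Nat.add_lt_of_lt_sub k.isLt⟩ *
                    (b ⟨(k : ℕ) + 1, Nat.add_lt_of_lt_sub k.isLt⟩ -
                      b ⟨(k : ℕ), Nat.lt_of_lt_of_le k.isLt (Nat.sub_le ℓ 1)⟩))) +
            persp (L i) (b ⟨ℓ - 1, Nat.sub_lt hℓ Nat.one_pos⟩)
              (z i ⟨ℓ - 1, Nat.sub_lt hℓ Nat.one_pos⟩) (p i (Fin.last ℓ)) ≤
          ((s i : ℝ) : EReal)) ∧
        (∀ j : Fin ℓ,
          (1 / (m₁ : ℝ)) * ∑ i ∈ A, z i j - (1 / (m : ℝ)) * ∑ i, z i j ≤ t) ∧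
        c = (((∑ i, s i) + lam * t : ℝ) : EReal)} ≤
    sInf {c : EReal |
      ∃ w : Fin n → ℝ,
        c = (((∑ i, L i (∑ k, w k * x i k)) + lam *
          Finset.univ.sup' ⟨⟨0, hℓ⟩, Finset.mem_univ _⟩ (fun j : Fin ℓ =>
            (1 / (m₁ : ℝ)) *
                ∑ i ∈ A, (if b j < ∑ k, w k * x i k then (1 : ℝ) else 0) -
              (1 / (m : ℝ)) *
                ∑ i, (if b j < ∑ k, w k * x i k then (1 : ℝ) else 0)) : ℝ) : EReal)} := by
  apply sInf_le_sInf
  rintro _ ⟨w, rfl⟩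
  refine ⟨w, fun i => breakpointIndicator b (∑ k, w k * x i k),
    fun i => segmentLength b (∑ k, w k * x i k) hℓ, fun i => L i (∑ k, w k * x i k), _,
    fun i j => breakpointIndicator_mem_Icc j,
    fun i => (sub_segmentLength_zero_add_sum hℓ).symm,
    fun i j h => segmentLength_succ_mem_bounds hℓ hb.monotone j h,
    fun i => segmentLength_zero_nonneg hℓ, fun i => segmentLength_last_nonneg hℓ,
    fun i => (perspConstraintLHS_lift (L i) hℓ hb.monotone _).le,
    fun j => Finset.le_sup'_iff _ |>.mpr ⟨j, Finset.mem_univ j, le_rfl⟩, rfl⟩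

/-- Conic relaxation validity: the optimal value of the convex relaxation (8) is at most
the optimal value of (FR1).  Optimal values are taken as infima in `EReal` over the
respective feasible regions. -/
theorem stmt13 (m n ℓ m₁ : ℕ) (hm : 1 ≤ m) (hℓ : 1 ≤ ℓ)
    (x : Fin m → Fin n → ℝ) (A : Finset (Fin m)) (hA : A.card = m₁) (hm₁ : 1 ≤ m₁)
    (b : Fin ℓ → ℝ) (hb : StrictMono b) (lam : ℝ) (hlam : 0 ≤ lam)
    (L : Fin m → ℝ → ℝ) :
    sInf {c : EReal |
      ∃ (w : Fin n → ℝ) (z : Fin m → Fin ℓ → ℝ) (p : Fin m → Fin (ℓ + 1) → ℝ)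
        (s : Fin m → ℝ) (t : ℝ),
        (∀ i j, z i j ∈ Set.Icc (0 : ℝ) 1) ∧
        (∀ i, ∑ k, w k * x i k = b ⟨0, hℓ⟩ - p i 0 + ∑ j : Fin ℓ, p i j.succ) ∧
        (∀ i, ∀ j : Fin ℓ, ∀ h : (j : ℕ) + 1 < ℓ,
          (b ⟨(j : ℕ) + 1, h⟩ - b j) * z i ⟨(j : ℕ) + 1, h⟩ ≤ p i j.succ ∧
          p i j.succ ≤ (b ⟨(j : ℕ) + 1, h⟩ - b j) * z i j) ∧
        (∀ i, 0 ≤ p i 0) ∧ (∀ i, 0 ≤ p i (Fin.last ℓ)) ∧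
        (∀ i, persp (L i) (b ⟨0, hℓ⟩) (1 - z i ⟨0, hℓ⟩) (-(p i 0)) +
            (∑ k : Fin (ℓ - 1),
              persp (L i) (b ⟨(k : ℕ), Nat.lt_of_lt_of_le k.isLt (Nat.sub_le ℓ 1)⟩)
                (z i ⟨(k : ℕ), Nat.lt_of_lt_of_le k.isLt (Nat.sub_le ℓ 1)⟩ -
                  z i ⟨(k : ℕ) + 1, Nat.add_lt_of_lt_sub k.isLt⟩)
                (p i ⟨(k : ℕ) + 1, Nat.lt_succ_of_lt (Nat.add_lt_of_lt_sub k.isLt)⟩ -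
                  z i ⟨(k : ℕ) + 1, Nat.add_lt_of_lt_sub k.isLt⟩ *
                    (b ⟨(k : ℕ) + 1, Nat.add_lt_of_lt_sub k.isLt⟩ -
                      b ⟨(k : ℕ), Nat.lt_of_lt_of_le k.isLt (Nat.sub_le ℓ 1)⟩))) +
            persp (L i) (b ⟨ℓ - 1, Nat.sub_lt hℓ Nat.one_pos⟩)
              (z i ⟨ℓ - 1, Nat.sub_lt hℓ Nat.one_pos⟩) (p i (Fin.last ℓ)) ≤
          ((s i : ℝ) : EReal)) ∧
        (∀ j : Fin ℓ,
          (1 / (m₁ : ℝ)) * ∑ i ∈ A, z i j - (1 / (m : ℝ)) * ∑ i, z i j ≤ t) ∧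
        c = (((∑ i, s i) + lam * t : ℝ) : EReal)} ≤
    sInf {c : EReal |
      ∃ w : Fin n → ℝ,
        c = (((∑ i, L i (∑ k, w k * x i k)) + lam *
          Finset.univ.sup' ⟨⟨0, hℓ⟩, Finset.mem_univ _⟩ (fun j : Fin ℓ =>
            (1 / (m₁ : ℝ)) *
                ∑ i ∈ A, (if b j < ∑ k, w k * x i k then (1 : ℝ) else 0) -
              (1 / (m : ℝ)) *
                ∑ i, (if b j < ∑ k, w k * x i k then (1 : ℝ) else 0)) : ℝ) : EReal)} :=
  stmt13_general m n ℓ m₁ hℓ x A b hb lam L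
end

section
/- (Weakness of the natural big-M relaxation.) Fix data x_1, ..., x_m ∈ ℝ^n, a subset A ⊆ [m] of cardinality m_1 ≥ 1, breakpoints b_1 < ... < b_ℓ, and w ∈ ℝ^n. If M ≥ 2|w·x_i − b_j| for all i ∈ [m], j ∈ [ℓ], then the point (w, z, t) with z_{ij} = 1/2 for all i, j and t = 0 is feasible for the continuous relaxation of (NAT), i.e., it satisfies (1/m_1) Σ_{i ∈ A} z_{ij} − (1/m) Σ_{i=1}^m z_{ij} ≤ t for all j ∈ [ℓ], w·x_i − b_j ≤ M z_{ij} and w·x_i − b_j ≥ −M(1 − z_{ij}) for all i, j, and z ∈ [0,1]^{m×ℓ}; moreover its objective Σ_{i=1}^m ℒ_i(w·x_i) + λ t equals Σ_{i=1}^m ℒ_i(w·x_i). Consequently, for sufficiently large M the optimal value of the continuous relaxation of (NAT) is at most min_{w ∈ ℝ^n} Σ_{i=1}^m ℒ_i(w·x_i), the value of the regression problem that disregards fairness. -/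
/-! With every `z i j = 1/2` and `t = 0`, each big-M pair of constraints only asks
`|w·xᵢ - bⱼ| ≤ M / 2`, and both averages in the fairness constraint equal `1/2`. So a minimizer
`w*` of the unfair objective stays feasible for the relaxation, with the same objective value. -/

open Finset

-- Both averages are `c`, except that `1 / 0 = 0` makes the average over `∅` equal to `0`.
lemma Finset.inv_card_mul_sum_const_le_of_subset {ι : Type*} {A s : Finset ι} (hAs : A ⊆ s)
    {c : ℝ} (hc : 0 ≤ c) :
    1 / (#A : ℝ) * ∑ _i ∈ A, c ≤ 1 / (#s : ℝ) * ∑ _i ∈ s, c := by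
  simp only [sum_const, nsmul_eq_mul]
  rcases A.eq_empty_or_nonempty with rfl | hA
  · simp only [card_empty, CharP.cast_eq_zero, div_zero, zero_mul]
    positivity
  · have hs : (#s : ℝ) ≠ 0 := by exact_mod_cast ((hA.mono hAs).card_pos).ne'
    have hA' : (#A : ℝ) ≠ 0 := by exact_mod_cast hA.card_pos.ne'
    rw [one_div, one_div, inv_mul_cancel_left₀ hA', inv_mul_cancel_left₀ hs]

lemma le_half_mul_and_neg_half_mul_le_of_two_mul_abs_le {d M : ℝ} (h : 2 * |d| ≤ M) :
    d ≤ M * (1 / 2) ∧ -(M * (1 - 1 / 2)) ≤ d := by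
  obtain ⟨hlow, hup⟩ := abs_le.mp (show |d| ≤ M / 2 by linarith)
  constructor <;> linarith

theorem stmt14_general (m n ℓ m₁ : ℕ)
    (x : Fin m → Fin n → ℝ) (A : Finset (Fin m)) (hA : A.card = m₁)
    (b : Fin ℓ → ℝ) (lam : ℝ)
    (L : Fin m → ℝ → ℝ) :
    (∀ (w : Fin n → ℝ) (M : ℝ),
      (∀ (i : Fin m) (j : Fin ℓ), 2 * |(∑ k, w k * x i k) - b j| ≤ M) →
      (∀ j : Fin ℓ,
        (1 / (m₁ : ℝ)) * ∑ _i ∈ A, (1 / 2 : ℝ) -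
          (1 / (m : ℝ)) * ∑ _i : Fin m, (1 / 2 : ℝ) ≤ (0 : ℝ)) ∧
      (∀ (i : Fin m) (j : Fin ℓ), (∑ k, w k * x i k) - b j ≤ M * (1 / 2 : ℝ)) ∧
      (∀ (i : Fin m) (j : Fin ℓ), -(M * (1 - (1 / 2 : ℝ))) ≤ (∑ k, w k * x i k) - b j) ∧
      ((1 / 2 : ℝ) ∈ Set.Icc (0 : ℝ) 1) ∧
      (∑ i, L i (∑ k, w k * x i k)) + lam * 0 = ∑ i, L i (∑ k, w k * x i k)) ∧
    (∀ wstar : Fin n → ℝ,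
      (∀ w : Fin n → ℝ,
        ∑ i, L i (∑ k, wstar k * x i k) ≤ ∑ i, L i (∑ k, w k * x i k)) →
      ∃ M₀ : ℝ, ∀ M : ℝ, M₀ ≤ M →
        sInf {c : EReal |
          ∃ (w : Fin n → ℝ) (z : Fin m → Fin ℓ → ℝ) (t : ℝ),
            (∀ i j, z i j ∈ Set.Icc (0 : ℝ) 1) ∧
            (∀ j : Fin ℓ,
              (1 / (m₁ : ℝ)) * ∑ i ∈ A, z i j - (1 / (m : ℝ)) * ∑ i, z i j ≤ t) ∧
            (∀ (i : Fin m) (j : Fin ℓ), (∑ k, w k * x i k) - b j ≤ M * z i j) ∧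
            (∀ (i : Fin m) (j : Fin ℓ),
              -(M * (1 - z i j)) ≤ (∑ k, w k * x i k) - b j) ∧
            c = (((∑ i, L i (∑ k, w k * x i k)) + lam * t : ℝ) : EReal)} ≤
        ((∑ i, L i (∑ k, wstar k * x i k) : ℝ) : EReal)) := by
  have fairness : (1 / (m₁ : ℝ)) * ∑ _i ∈ A, (1 / 2 : ℝ) -
      (1 / (m : ℝ)) * ∑ _i : Fin m, (1 / 2 : ℝ) ≤ 0 := by
    have := inv_card_mul_sum_const_le_of_subset (subset_univ A) (by norm_num : (0 : ℝ) ≤ 1 / 2)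
    rw [card_univ, Fintype.card_fin, hA] at this
    linarith
  refine ⟨fun w M hM => ⟨fun _ => fairness,
      fun i j => (le_half_mul_and_neg_half_mul_le_of_two_mul_abs_le (hM i j)).1,
      fun i j => (le_half_mul_and_neg_half_mul_le_of_two_mul_abs_le (hM i j)).2,
      ⟨by norm_num, by norm_num⟩, by ring⟩, fun wstar _ => ?_⟩
  let gap : Fin m × Fin ℓ → ℝ := fun p => 2 * |(∑ k, wstar k * x p.1 k) - b p.2|
  -- A sum rather than a maximum of the gaps, so that no index set has to be nonempty.
  refine ⟨∑ p, gap p, fun M hM => ?_⟩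
  have big_M (i : Fin m) (j : Fin ℓ) : gap (i, j) ≤ M :=
    (single_le_sum (fun p _ => by positivity) (mem_univ (i, j))).trans hM
  calc sInf _ ≤ (((∑ i, L i (∑ k, wstar k * x i k)) + lam * 0 : ℝ) : EReal) :=
        sInf_le <| by exact ⟨wstar, fun _ _ => 1 / 2, 0, fun _ _ => ⟨by norm_num, by norm_num⟩,
          fun _ => fairness,
          fun i j => (le_half_mul_and_neg_half_mul_le_of_two_mul_abs_le (big_M i j)).1,
          fun i j => (le_half_mul_and_neg_half_mul_le_of_two_mul_abs_le (big_M i j)).2, rfl⟩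
    _ = _ := by rw [mul_zero, add_zero]

/-- Weakness of the natural big-M relaxation.  If `M ≥ 2|w·xᵢ − bⱼ|` for all `i, j`,
then `(w, z, t)` with `z_{ij} = 1/2` and `t = 0` is feasible for the continuous
relaxation of (NAT) and has objective `Σᵢ ℒᵢ(w·xᵢ)`.  Consequently, if `w*` minimizes
the unfair regression objective, then for all sufficiently large `M` the optimal value
(infimum, in `EReal`) of the continuous relaxation of (NAT) is at most
`Σᵢ ℒᵢ(w*·xᵢ) = min_w Σᵢ ℒᵢ(w·xᵢ)`. -/
theorem stmt14 (m n ℓ m₁ : ℕ) (hm : 1 ≤ m) (hℓ : 1 ≤ ℓ)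
    (x : Fin m → Fin n → ℝ) (A : Finset (Fin m)) (hA : A.card = m₁) (hm₁ : 1 ≤ m₁)
    (b : Fin ℓ → ℝ) (hb : StrictMono b) (lam : ℝ) (hlam : 0 ≤ lam)
    (L : Fin m → ℝ → ℝ) :
    (∀ (w : Fin n → ℝ) (M : ℝ),
      (∀ (i : Fin m) (j : Fin ℓ), 2 * |(∑ k, w k * x i k) - b j| ≤ M) →
      (∀ j : Fin ℓ,
        (1 / (m₁ : ℝ)) * ∑ _i ∈ A, (1 / 2 : ℝ) -
          (1 / (m : ℝ)) * ∑ _i : Fin m, (1 / 2 : ℝ) ≤ (0 : ℝ)) ∧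
      (∀ (i : Fin m) (j : Fin ℓ), (∑ k, w k * x i k) - b j ≤ M * (1 / 2 : ℝ)) ∧
      (∀ (i : Fin m) (j : Fin ℓ), -(M * (1 - (1 / 2 : ℝ))) ≤ (∑ k, w k * x i k) - b j) ∧
      ((1 / 2 : ℝ) ∈ Set.Icc (0 : ℝ) 1) ∧
      (∑ i, L i (∑ k, w k * x i k)) + lam * 0 = ∑ i, L i (∑ k, w k * x i k)) ∧
    (∀ wstar : Fin n → ℝ,
      (∀ w : Fin n → ℝ,
        ∑ i, L i (∑ k, wstar k * x i k) ≤ ∑ i, L i (∑ k, w k * x i k)) →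
      ∃ M₀ : ℝ, ∀ M : ℝ, M₀ ≤ M →
        sInf {c : EReal |
          ∃ (w : Fin n → ℝ) (z : Fin m → Fin ℓ → ℝ) (t : ℝ),
            (∀ i j, z i j ∈ Set.Icc (0 : ℝ) 1) ∧
            (∀ j : Fin ℓ,
              (1 / (m₁ : ℝ)) * ∑ i ∈ A, z i j - (1 / (m : ℝ)) * ∑ i, z i j ≤ t) ∧
            (∀ (i : Fin m) (j : Fin ℓ), (∑ k, w k * x i k) - b j ≤ M * z i j) ∧
            (∀ (i : Fin m) (j : Fin ℓ),
              -(M * (1 - z i j)) ≤ (∑ k, w k * x i k) - b j) ∧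
            c = (((∑ i, L i (∑ k, w k * x i k)) + lam * t : ℝ) : EReal)} ≤
        ((∑ i, L i (∑ k, wstar k * x i k) : ℝ) : EReal)) :=
  stmt14_general m n ℓ m₁ x A hA b lam L
end
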